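/- Let (R,V) be a generalized root system with base S, set R⁺ = R⁺(S), and let α ∈ S. Then the set P := (R⁺ \ {kα : k a positive integer}) ∪ ({kα : k a negative integer} ∩ R) is a positive system of R, and P = R⁺(S'), where S' := {−α} ∪ {β + q_β α : β ∈ S, β ≠ α} is a base of R and, for β ∈ S with β ≠ α, q_β denotes the largest integer q ≥ 0 such that β + qα ∈ R. -/

import Mathlib

open scoped RealInnerProductSpace

variable {V : Type*} [NormedAddCommGroup V] [InnerProductSpace ℝ V] [FiniteDimensional ℝ V]

/-- A generalized root system: `R` is a nonempty finite spanning set such that for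
`α, β ∈ R`: `⟪α,β⟫ < 0` implies `α+β ∈ R`; `⟪α,β⟫ > 0` implies `α-β ∈ R`; and
`⟪α,β⟫ = 0` implies `α+β ∈ R ↔ α-β ∈ R`. -/
def IsGRS (R : Set V) : Prop :=
  R.Nonempty ∧ R.Finite ∧ Submodule.span ℝ R = ⊤ ∧
    ∀ α ∈ R, ∀ β ∈ R,
      (⟪α, β⟫ < 0 → α + β ∈ R) ∧
      (0 < ⟪α, β⟫ → α - β ∈ R) ∧
      (⟪α, β⟫ = 0 → (α + β ∈ R ↔ α - β ∈ R))

/-- `v` is a linear combination of elements of `S` with nonnegative integer coefficients. -/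
def IsNonnegIntComb (S : Set V) (v : V) : Prop :=
  ∃ c : V →₀ ℤ, ↑c.support ⊆ S ∧ (∀ α, 0 ≤ c α) ∧ v = c.sum fun α n => (n : ℝ) • α

/-- A base of a GRS `R`: a subset of `R` which is a vector-space basis of `V` such that
every root is a linear combination of `S` with coefficients all nonnegative integers or
all nonpositive integers. -/
def IsBase (R S : Set V) : Prop :=
  S ⊆ R ∧ LinearIndependent ℝ ((↑) : S → V) ∧ Submodule.span ℝ S = ⊤ ∧
    ∀ β ∈ R, IsNonnegIntComb S β ∨ IsNonnegIntComb S (-β)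

/-- `R⁺(S)`: the roots whose coefficients in `S` are all nonnegative integers. -/
def posRoots (R S : Set V) : Set V := {β ∈ R | IsNonnegIntComb S β}

/-- The partial order `≺_S`: `x ≺_S y` iff `y - x` is a nonnegative integer combination
of `S`. -/
def prec (S : Set V) (x y : V) : Prop := IsNonnegIntComb S (y - x)

/-- `β` is indecomposable in `P`: `β ∈ P` and `β` is not the sum of two nonzero
elements of `P`. -/
def IsIndecomposableIn (P : Set V) (β : V) : Prop :=
  β ∈ P ∧ ¬∃ γ ∈ P, ∃ δ ∈ P, γ ≠ 0 ∧ δ ≠ 0 ∧ β = γ + δ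

/-- A positive system of `R`. -/
def IsPositiveSystem (R P : Set V) : Prop :=
  P ⊆ R ∧ (∀ α ∈ P, ∀ β ∈ P, α + β ∈ R → α + β ∈ P) ∧ R = P ∪ -P ∧ P ∩ -P = {0}

/-- Irreducibility of a GRS. -/
def IsIrreducibleGRS (R : Set V) : Prop :=
  ∀ R₁ R₂ : Set V, R = R₁ ∪ R₂ → (∀ α ∈ R₁, ∀ β ∈ R₂, ⟪α, β⟫ = 0) →
    R₁ ⊆ {0} ∨ R₂ ⊆ {0}

/-- A primitive root of `R`. -/
def IsPrimitive (R : Set V) (α : V) : Prop :=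
  α ∈ R ∧ α ≠ 0 ∧ ∀ (k : ℤ) (α' : V), 0 < k → α' ∈ R → α = (k : ℝ) • α' → k = 1

/-- The orthogonal projection `π_I` of `V` onto the orthogonal complement of the span
of `I`. -/
noncomputable def projAway (I : Set V) : V → ↥((Submodule.span ℝ I)ᗮ) :=
  fun v => Submodule.orthogonalProjectionOnto ((Submodule.span ℝ I)ᗮ) v

/-- A root system. -/
def IsRootSystem (Δ : Set V) : Prop :=
  Δ.Finite ∧ (0 : V) ∉ Δ ∧ Submodule.span ℝ Δ = ⊤ ∧
    ∀ α ∈ Δ, ∀ β ∈ Δ,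
      (β - (2 * ⟪β, α⟫ / ⟪α, α⟫) • α ∈ Δ) ∧
      (∃ n : ℤ, 2 * ⟪β, α⟫ / ⟪α, α⟫ = (n : ℝ)) ∧
      ∀ t : ℝ, t • α ∈ Δ → t = 1 ∨ t = -1

/-!
Let `σ` be the linear involution of `V` with `σ α = -α` and `σ β = β + q_β α` for the other
`β ∈ S`, so that `S' = σ S` and `v` is a nonnegative integer combination of `S'` iff `σ v` is one
of `S`. Everything then reduces to the following: for a positive root `x` that is not a multiple
of `α`, the `α`-coefficient `d x = Σ_{β ≠ α} q_β c_β(x) - c_α(x)` of `σ x` is nonnegative.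

This is proved by descent on the height for the stronger claim `d x > 0 ∨ (d x = 0 ∧ x + α ∉ R)`.
Expanding a counterexample `x` along `S` (if `d x < 0`) or along `S'` (if `d x = 0`), the identity
`0 < ⟪x, x⟫` yields a base vector `t` with positive coefficient and `0 < ⟪x, t⟫`; then `x - t` is
a root, and it is again a counterexample. In the case `d x = 0`, maximality of `q` gives
`⟪t, α⟫ ≥ 0`, so that `(x + α) - t` is a root as well.
-/

set_option linter.unusedSectionVars false

namespace IsGRS

variable {R : Set V}

theorem sub_mem_of_inner_pos (hR : IsGRS R) {α β : V} (hα : α ∈ R) (hβ : β ∈ R)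
    (h : 0 < ⟪α, β⟫) : α - β ∈ R :=
  (hR.2.2.2 α hα β hβ).2.1 h

theorem add_mem_of_inner_neg (hR : IsGRS R) {α β : V} (hα : α ∈ R) (hβ : β ∈ R)
    (h : ⟪α, β⟫ < 0) : α + β ∈ R :=
  (hR.2.2.2 α hα β hβ).1 h

theorem zero_mem (hR : IsGRS R) : (0 : V) ∈ R := by
  obtain ⟨γ, hγ⟩ := hR.1
  by_cases h : γ = 0
  · exact h ▸ hγ
  · simpa using hR.sub_mem_of_inner_pos hγ hγ (real_inner_self_pos.2 h)

theorem neg_mem (hR : IsGRS R) {γ : V} (hγ : γ ∈ R) : -γ ∈ R := by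
  simpa using ((hR.2.2.2 0 hR.zero_mem γ hγ).2.2 (inner_zero_left _)).1 (by simpa using hγ)

end IsGRS

theorem apply_mem_of_mem_closure {M : Type*} [AddCommMonoid M] {S : Set V} (φ : V →+ M)
    {T : AddSubmonoid M} (h : ∀ s ∈ S, φ s ∈ T) {v : V} (hv : v ∈ AddSubmonoid.closure S) :
    φ v ∈ T :=
  AddSubmonoid.closure_le (S := T.comap φ) |>.2 h hv

theorem intCast_smul_mem_closure {S : Set V} {α : V} (hα : α ∈ S) {k : ℤ} (hk : 0 ≤ k) :
    (k : ℝ) • α ∈ AddSubmonoid.closure S := by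
  rw [← Int.toNat_of_nonneg hk, Int.cast_natCast, Nat.cast_smul_eq_nsmul]
  exact nsmul_mem (AddSubmonoid.subset_closure hα) _

theorem isNonnegIntComb_iff {S : Set V} {v : V} :
    IsNonnegIntComb S v ↔ v ∈ AddSubmonoid.closure S := by
  classical
  constructor
  · rintro ⟨c, hcS, hc, rfl⟩
    exact AddSubmonoid.sum_mem _ fun a ha => intCast_smul_mem_closure (hcS ha) (hc a)
  · intro hv
    induction hv using AddSubmonoid.closure_induction with
    | mem s hs => exact ⟨Finsupp.single s 1, by simpa using hs, fun _ => by
        rw [Finsupp.single_apply]; split <;> simp, by simp⟩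
    | zero => exact ⟨0, by simp, fun _ => le_rfl, by simp⟩
    | add x y _ _ hx hy =>
      obtain ⟨c, hcS, hc, rfl⟩ := hx
      obtain ⟨d, hdS, hd, rfl⟩ := hy
      refine ⟨c + d, fun w hw => ?_, fun w => add_nonneg (hc w) (hd w), ?_⟩
      · rcases Finset.mem_union.mp (Finsupp.support_add hw) with h | h
        exacts [hcS h, hdS h]
      · rw [Finsupp.sum_add_index' (fun _ => by simp) fun _ _ _ => by push_cast; rw [add_smul]]

theorem exists_pos_inner_of_eq_sum {ι : Type*} (s : Finset ι) (c : ι → ℝ) (w : ι → V) {x : V}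
    (hx : x = ∑ i ∈ s, c i • w i) (hc : ∀ i ∈ s, 0 ≤ c i) (hx0 : x ≠ 0) :
    ∃ i ∈ s, 0 < c i ∧ 0 < ⟪x, w i⟫ := by
  by_contra! h
  have hsum : ⟪x, x⟫ = ∑ i ∈ s, c i * ⟪x, w i⟫ := by
    nth_rewrite 2 [hx]
    simp only [inner_sum, real_inner_smul_right]
  have : ⟪x, x⟫ ≤ 0 := hsum ▸ Finset.sum_nonpos fun i hi =>
    (hc i hi).eq_or_lt.elim (fun h0 => by simp [← h0]) fun hpos =>
      mul_nonpos_of_nonneg_of_nonpos hpos.le (h i hi hpos)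
  exact (real_inner_self_pos.2 hx0).not_ge this

namespace IsBase

variable {R S : Set V}

noncomputable def basis (hS : IsBase R S) : Module.Basis S ℝ V :=
  Module.Basis.mk hS.2.1 (by rw [Subtype.range_coe]; exact hS.2.2.1.ge)

@[simp]
theorem basis_apply (hS : IsBase R S) (s : S) : hS.basis s = s :=
  Module.Basis.mk_apply _ _ _

theorem repr_of_mem (hS : IsBase R S) {s : V} (hs : s ∈ S) :
    hS.basis.repr s = Finsupp.single ⟨s, hs⟩ 1 := by
  simpa using hS.basis.repr_self ⟨s, hs⟩

theorem repr_apply_of_ne (hS : IsBase R S) {s : V} (hs : s ∈ S) {u : S} (hu : (u : V) ≠ s) :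
    hS.basis.repr s u = 0 := by
  simp [hS.repr_of_mem hs, Subtype.ext_iff, Ne.symm hu]

theorem eq_sum_repr (hS : IsBase R S) (v : V) :
    v = ∑ u ∈ (hS.basis.repr v).support, hS.basis.repr v u • (u : V) := by
  conv_lhs => rw [← hS.basis.linearCombination_repr v, Finsupp.linearCombination_apply]
  simp [Finsupp.sum]

theorem exists_nat_repr_of_mem_closure (hS : IsBase R S) {v : V}
    (hv : v ∈ AddSubmonoid.closure S) (u : S) : ∃ n : ℕ, hS.basis.repr v u = n := by
  classical
  obtain ⟨n, hn⟩ := apply_mem_of_mem_closure (T := AddMonoidHom.mrange (Nat.castAddMonoidHom ℝ))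
    (hS.basis.coord u).toAddMonoidHom (fun s hs => ⟨if (⟨s, hs⟩ : S) = u then 1 else 0, by
      simp [hS.repr_of_mem hs, Finsupp.single_apply, apply_ite]⟩) hv
  exact ⟨n, hn.symm⟩

theorem repr_nonneg_of_mem_closure (hS : IsBase R S) {v : V}
    (hv : v ∈ AddSubmonoid.closure S) (u : S) : 0 ≤ hS.basis.repr v u := by
  obtain ⟨n, hn⟩ := hS.exists_nat_repr_of_mem_closure hv u
  exact hn ▸ n.cast_nonneg

theorem one_le_repr_of_mem_closure (hS : IsBase R S) {v : V}
    (hv : v ∈ AddSubmonoid.closure S) {u : S} (h : 0 < hS.basis.repr v u) :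
    1 ≤ hS.basis.repr v u := by
  obtain ⟨n, hn⟩ := hS.exists_nat_repr_of_mem_closure hv u
  rw [hn] at h ⊢
  have : 0 < n := by exact_mod_cast h
  exact_mod_cast this

theorem mem_closure_of_exists_nat_repr (hS : IsBase R S) {v : V}
    (h : ∀ u, ∃ n : ℕ, hS.basis.repr v u = n) : v ∈ AddSubmonoid.closure S := by
  rw [hS.eq_sum_repr v]
  refine AddSubmonoid.sum_mem _ fun u _ => ?_
  obtain ⟨n, hn⟩ := h u
  rw [hn, Nat.cast_smul_eq_nsmul]
  exact nsmul_mem (AddSubmonoid.subset_closure u.2) n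

theorem mem_closure_or_neg_mem_closure (hS : IsBase R S) {v : V} (hv : v ∈ R) :
    v ∈ AddSubmonoid.closure S ∨ -v ∈ AddSubmonoid.closure S := by
  simpa only [isNonnegIntComb_iff] using hS.2.2.2 v hv

theorem eq_zero_of_repr_nonneg_of_neg_mem_closure (hS : IsBase R S) {v : V}
    (h : ∀ u, 0 ≤ hS.basis.repr v u) (hneg : -v ∈ AddSubmonoid.closure S) : v = 0 :=
  hS.basis.ext_elem fun u => by
    have := hS.repr_nonneg_of_mem_closure hneg u
    simp only [map_neg, Finsupp.coe_neg, Pi.neg_apply, neg_nonneg] at this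
    simpa using le_antisymm this (h u)

theorem mem_closure_of_repr_nonneg (hS : IsBase R S) {v : V} (hv : v ∈ R)
    (h : ∀ u, 0 ≤ hS.basis.repr v u) : v ∈ AddSubmonoid.closure S := by
  rcases hS.mem_closure_or_neg_mem_closure hv with hpos | hneg
  · exact hpos
  · rw [hS.eq_zero_of_repr_nonneg_of_neg_mem_closure h hneg]
    exact zero_mem _

theorem mem_closure_of_repr_pos (hS : IsBase R S) {v : V} (hv : v ∈ R) {u : S}
    (h : 0 < hS.basis.repr v u) : v ∈ AddSubmonoid.closure S := by
  refine (hS.mem_closure_or_neg_mem_closure hv).resolve_right fun hneg => ?_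
  have := hS.repr_nonneg_of_mem_closure hneg u
  simp only [map_neg, Finsupp.coe_neg, Pi.neg_apply, neg_nonneg] at this
  linarith

theorem isPositiveSystem_posRoots (hR : IsGRS R) (hS : IsBase R S) :
    IsPositiveSystem R (posRoots R S) := by
  have hmem : ∀ {v}, v ∈ posRoots R S ↔ v ∈ R ∧ v ∈ AddSubmonoid.closure S := by
    simp [posRoots, isNonnegIntComb_iff]
  refine ⟨fun v hv => hv.1, fun u hu v hv huv => ?_, ?_, ?_⟩
  · rw [hmem] at hu hv ⊢
    exact ⟨huv, add_mem hu.2 hv.2⟩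
  · ext v
    simp only [Set.mem_union, Set.mem_neg, hmem]
    refine ⟨fun hv => (hS.mem_closure_or_neg_mem_closure hv).imp (⟨hv, ·⟩)
      (⟨hR.neg_mem hv, ·⟩), ?_⟩
    rintro (h | h)
    · exact h.1
    · simpa using hR.neg_mem h.1
  · ext v
    simp only [Set.mem_inter_iff, Set.mem_neg, hmem, Set.mem_singleton_iff]
    constructor
    · rintro ⟨⟨_, hv⟩, _, hneg⟩
      exact hS.eq_zero_of_repr_nonneg_of_neg_mem_closure
        (hS.repr_nonneg_of_mem_closure hv) hneg
    · rintro rfl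
      simp [hR.zero_mem, zero_mem]

theorem exists_repr_ne_zero_of_notMem_span (hS : IsBase R S) {α v : V} (hα : α ∈ S)
    (hv : v ∉ ℝ ∙ α) : ∃ u : S, (u : V) ≠ α ∧ hS.basis.repr v u ≠ 0 := by
  by_contra! h
  refine hv (Submodule.mem_span_singleton.2
    ⟨hS.basis.repr v ⟨α, hα⟩, hS.basis.ext_elem fun u => ?_⟩)
  by_cases hu : (u : V) = α
  · obtain rfl : u = ⟨α, hα⟩ := Subtype.ext hu
    simp [hS.repr_of_mem hα]
  · simp [hS.repr_apply_of_ne hα hu, h u hu]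

theorem exists_nat_eq_of_smul_mem_closure (hS : IsBase R S) {α : V} (hα : α ∈ S) {m : ℝ}
    (h : m • α ∈ AddSubmonoid.closure S) : ∃ n : ℕ, m = n := by
  obtain ⟨n, hn⟩ := hS.exists_nat_repr_of_mem_closure h ⟨α, hα⟩
  exact ⟨n, by simpa [hS.repr_of_mem hα] using hn⟩

variable {α : V}

open Classical in
/-- For a root system `q β = -⟨β, α^∨⟩`, so this is the simple reflection `s_α`. -/
noncomputable def reflect (hS : IsBase R S) (α : V) (q : V → ℕ) : V →ₗ[ℝ] V :=
  hS.basis.constr ℝ fun s => if (s : V) = α then -α else s + (q s : ℝ) • α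

theorem reflect_self (hS : IsBase R S) (hα : α ∈ S) (q : V → ℕ) :
    hS.reflect α q α = -α := by
  classical
  simpa [reflect] using hS.basis.constr_basis ℝ
    (fun s => if (s : V) = α then -α else s + (q s : ℝ) • α) ⟨α, hα⟩

theorem reflect_of_ne (hS : IsBase R S) {β : V} (hβ : β ∈ S) (hne : β ≠ α) (q : V → ℕ) :
    hS.reflect α q β = β + (q β : ℝ) • α := by
  classical
  simpa [reflect, hne] using hS.basis.constr_basis ℝ
    (fun s => if (s : V) = α then -α else s + (q s : ℝ) • α) ⟨β, hβ⟩

theorem reflect_reflect (hS : IsBase R S) (hα : α ∈ S) (q : V → ℕ) (v : V) :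
    hS.reflect α q (hS.reflect α q v) = v := by
  have : hS.reflect α q ∘ₗ hS.reflect α q = LinearMap.id := hS.basis.ext fun s => by
    by_cases hs : (s : V) = α
    · simp [hs, hS.reflect_self hα]
    · simp [hS.reflect_of_ne s.2 hs, hS.reflect_self hα]
  exact LinearMap.congr_fun this v

theorem image_reflect (hS : IsBase R S) (hα : α ∈ S) (q : V → ℕ) :
    hS.reflect α q '' S = insert (-α) ((fun β => β + (q β : ℝ) • α) '' (S \ {α})) := by
  ext v
  constructor
  · rintro ⟨β, hβ, rfl⟩
    by_cases hβα : β = α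
    · subst hβα
      exact hS.reflect_self hβ q ▸ Set.mem_insert _ _
    · exact hS.reflect_of_ne hβ hβα q ▸ Set.mem_insert_of_mem _ ⟨β, ⟨hβ, hβα⟩, rfl⟩
  · rintro (rfl | ⟨β, ⟨hβ, hβα⟩, rfl⟩)
    · exact ⟨α, hα, hS.reflect_self hα q⟩
    · exact ⟨β, hβ, hS.reflect_of_ne hβ hβα q⟩

theorem repr_reflect_of_ne (hS : IsBase R S) (hα : α ∈ S) (q : V → ℕ) {u : S}
    (hu : (u : V) ≠ α) (v : V) : hS.basis.repr (hS.reflect α q v) u = hS.basis.repr v u := by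
  have : hS.basis.coord u ∘ₗ hS.reflect α q = hS.basis.coord u := hS.basis.ext fun s => by
    have hαu := hS.repr_apply_of_ne hα hu
    by_cases hs : (s : V) = α
    · simp [hs, hS.reflect_self hα, hαu]
    · simp [hS.reflect_of_ne s.2 hs, hαu]
  exact LinearMap.congr_fun this v

theorem mem_closure_image_reflect_iff (hS : IsBase R S) (hα : α ∈ S) (q : V → ℕ) {v : V} :
    v ∈ AddSubmonoid.closure (hS.reflect α q '' S) ↔
      hS.reflect α q v ∈ AddSubmonoid.closure S := by
  have hmap : ∀ (T : Set V) {w : V}, w ∈ AddSubmonoid.closure T →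
      hS.reflect α q w ∈ AddSubmonoid.closure (hS.reflect α q '' T) := fun T w hw => by
    rw [← AddMonoidHom.map_mclosure]
    exact ⟨w, hw, rfl⟩
  refine ⟨fun hv => ?_, fun hv => hS.reflect_reflect hα q v ▸ hmap S hv⟩
  simpa [Set.image_image, hS.reflect_reflect hα q] using hmap _ hv

/-- The coefficient of `-α` along the base `reflect '' S`. -/
noncomputable def reflectCoord (hS : IsBase R S) (hα : α ∈ S) (q : V → ℕ) : V →ₗ[ℝ] ℝ :=
  hS.basis.coord ⟨α, hα⟩ ∘ₗ hS.reflect α q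

theorem reflectCoord_self (hS : IsBase R S) (hα : α ∈ S) (q : V → ℕ) :
    hS.reflectCoord hα q α = -1 := by
  simp [reflectCoord, hS.reflect_self hα, hS.repr_of_mem hα]

theorem reflectCoord_of_ne (hS : IsBase R S) (hα : α ∈ S) (q : V → ℕ) {β : V} (hβ : β ∈ S)
    (hne : β ≠ α) : hS.reflectCoord hα q β = q β := by
  simp [reflectCoord, hS.reflect_of_ne hβ hne, hS.repr_of_mem hα, hS.repr_of_mem hβ, hne]

theorem reflectCoord_reflect_of_ne (hS : IsBase R S) (hα : α ∈ S) (q : V → ℕ) {β : V}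
    (hβ : β ∈ S) (hne : β ≠ α) : hS.reflectCoord hα q (hS.reflect α q β) = 0 := by
  simp [reflectCoord, hS.reflect_reflect hα, hS.repr_of_mem hβ, hne]

theorem exists_int_reflectCoord_of_mem_closure (hS : IsBase R S) (hα : α ∈ S) (q : V → ℕ)
    {v : V} (hv : v ∈ AddSubmonoid.closure S) : ∃ n : ℤ, hS.reflectCoord hα q v = n := by
  have hint : ∀ β ∈ S, ∃ n : ℤ, n = hS.reflectCoord hα q β := fun β hβ => by
    by_cases hne : β = α
    · exact ⟨-1, by simp [hne, hS.reflectCoord_self hα]⟩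
    · exact ⟨q β, by simp [hS.reflectCoord_of_ne hα q hβ hne]⟩
  obtain ⟨n, hn⟩ := apply_mem_of_mem_closure (T := AddMonoidHom.mrange (Int.castAddHom ℝ))
    (hS.reflectCoord hα q).toAddMonoidHom hint hv
  exact ⟨n, hn.symm⟩

theorem sumCoords_of_mem (hS : IsBase R S) {s : V} (hs : s ∈ S) : hS.basis.sumCoords s = 1 := by
  simpa using hS.basis.sumCoords_self_apply ⟨s, hs⟩

theorem exists_nat_sumCoords_of_mem_closure (hS : IsBase R S) {v : V}
    (hv : v ∈ AddSubmonoid.closure S) : ∃ n : ℕ, hS.basis.sumCoords v = n := by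
  obtain ⟨n, hn⟩ := apply_mem_of_mem_closure (T := AddMonoidHom.mrange (Nat.castAddMonoidHom ℝ))
    hS.basis.sumCoords.toAddMonoidHom (fun s hs => ⟨1, by simp [hS.sumCoords_of_mem hs]⟩) hv
  exact ⟨n, hn.symm⟩

theorem repr_sub_nonneg (hS : IsBase R S) {v : V} (hv : v ∈ AddSubmonoid.closure S) {t : S}
    (ht : 0 < hS.basis.repr v t) (u : S) : 0 ≤ hS.basis.repr (v - t) u := by
  have := hS.one_le_repr_of_mem_closure hv ht
  have := hS.repr_nonneg_of_mem_closure hv u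
  by_cases hu : u = t
  · subst hu
    rw [map_sub, Finsupp.sub_apply, hS.repr_of_mem u.2, Finsupp.single_eq_same]
    linarith
  · simpa [hS.repr_of_mem t.2, Finsupp.single_apply, Ne.symm hu]

def IsMaxStringLength (R S : Set V) (α : V) (q : V → ℕ) : Prop :=
  ∀ β ∈ S, β ≠ α → β + (q β : ℝ) • α ∈ R ∧ ∀ n : ℕ, β + (n : ℝ) • α ∈ R → n ≤ q β

/-- Counterexamples to `0 ≤ reflectCoord x`, in the stronger form that is closed under descent. -/
def IsBadRoot (hS : IsBase R S) (hα : α ∈ S) (q : V → ℕ) (x : V) : Prop :=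
  x ∈ R ∧ x ∈ AddSubmonoid.closure S ∧ x ∉ ℝ ∙ α ∧
    (hS.reflectCoord hα q x < 0 ∨ hS.reflectCoord hα q x = 0 ∧ x + α ∈ R)

theorem exists_isBadRoot_lt_of_reflectCoord_neg (hR : IsGRS R) (hS : IsBase R S) (hα : α ∈ S)
    {q : V → ℕ} (hq : IsMaxStringLength R S α q) {x : V} (hxR : x ∈ R)
    (hxC : x ∈ AddSubmonoid.closure S) (hxα : x ∉ ℝ ∙ α) (hneg : hS.reflectCoord hα q x < 0) :
    ∃ y, hS.IsBadRoot hα q y ∧ hS.basis.sumCoords y < hS.basis.sumCoords x := by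
  have hx0 : x ≠ 0 := fun h => hxα (h ▸ zero_mem _)
  obtain ⟨t, -, hxt, hin⟩ := exists_pos_inner_of_eq_sum _ _ _ (hS.eq_sum_repr x)
    (fun u _ => hS.repr_nonneg_of_mem_closure hxC u) hx0
  have hyR : x - t ∈ R := hR.sub_mem_of_inner_pos hxR (hS.1 t.2) hin
  have hyC : x - t ∈ AddSubmonoid.closure S :=
    hS.mem_closure_of_repr_nonneg hyR (hS.repr_sub_nonneg hxC hxt)
  have hht : hS.basis.sumCoords (x - t) < hS.basis.sumCoords x := by
    rw [map_sub, hS.sumCoords_of_mem t.2]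
    linarith
  by_cases htα : (t : V) = α
  · have hyα : x - t ∉ ℝ ∙ α := fun h =>
      hxα (by simpa [htα] using add_mem h (Submodule.mem_span_singleton_self α))
    obtain ⟨n, hn⟩ := hS.exists_int_reflectCoord_of_mem_closure hα q hxC
    have hn1 : (n : ℝ) ≤ -1 := by
      have : n < 0 := by exact_mod_cast hn ▸ hneg
      exact_mod_cast Int.le_sub_one_of_lt this
    have hdy : hS.reflectCoord hα q (x - t) = hS.reflectCoord hα q x + 1 := by
      simp [htα, hS.reflectCoord_self hα]
    refine ⟨x - t, ⟨hyR, hyC, hyα, ?_⟩, hht⟩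
    rcases (show hS.reflectCoord hα q (x - t) ≤ 0 by linarith).lt_or_eq with h | h
    · exact Or.inl h
    · exact Or.inr ⟨h, by simpa [htα] using hxR⟩
  · have hdy : hS.reflectCoord hα q (x - t) = hS.reflectCoord hα q x - q t := by
      simp [hS.reflectCoord_of_ne hα q t.2 htα]
    refine ⟨x - t, ⟨hyR, hyC, fun hspan => ?_, Or.inl (by linarith [(q t).cast_nonneg (α := ℝ)])⟩,
      hht⟩
    obtain ⟨m, hm⟩ := Submodule.mem_span_singleton.1 hspan
    obtain ⟨n, rfl⟩ := hS.exists_nat_eq_of_smul_mem_closure hα (hm ▸ hyC)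
    have hxeq : x = t + (n : ℝ) • α := (sub_eq_iff_eq_add'.1 hm.symm)
    have hnq : (n : ℝ) ≤ q t := by exact_mod_cast (hq t t.2 htα).2 n (hxeq ▸ hxR)
    have hdx : hS.reflectCoord hα q x = q t - n := by
      rw [hxeq, map_add, map_smul, hS.reflectCoord_of_ne hα q t.2 htα, hS.reflectCoord_self hα,
        smul_eq_mul]
      ring
    linarith

theorem exists_inner_reflect_pos (hS : IsBase R S) (hα : α ∈ S) (q : V → ℕ) {x : V}
    (hxC : x ∈ AddSubmonoid.closure S) (hx0 : x ≠ 0) (hd : hS.reflectCoord hα q x = 0) :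
    ∃ t : S, (t : V) ≠ α ∧ 0 < hS.basis.repr x t ∧ 0 < ⟪x, hS.reflect α q t⟫ := by
  set σ := hS.reflect α q
  have hdσ : hS.basis.repr (σ x) ⟨α, hα⟩ = 0 := hd
  have hσx : ∀ u, 0 ≤ hS.basis.repr (σ x) u := fun u => by
    by_cases hu : (u : V) = α
    · obtain rfl : u = ⟨α, hα⟩ := Subtype.ext hu
      exact hdσ.ge
    · rw [hS.repr_reflect_of_ne hα q hu]
      exact hS.repr_nonneg_of_mem_closure hxC u
  have hexp : x = ∑ u ∈ (hS.basis.repr (σ x)).support, hS.basis.repr (σ x) u • σ u := by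
    conv_lhs => rw [← hS.reflect_reflect hα q x, hS.eq_sum_repr (σ x)]
    simp only [map_sum, map_smul]
    rfl
  obtain ⟨t, -, hxt, hin⟩ := exists_pos_inner_of_eq_sum _ _ _ hexp (fun u _ => hσx u) hx0
  have htα : (t : V) ≠ α := by
    rintro h
    obtain rfl : t = ⟨α, hα⟩ := Subtype.ext h
    exact hxt.ne' hdσ
  exact ⟨t, htα, by rwa [← hS.repr_reflect_of_ne hα q htα], hin⟩

theorem exists_isBadRoot_lt_of_reflectCoord_eq_zero (hR : IsGRS R) (hS : IsBase R S)
    (hα : α ∈ S) {q : V → ℕ} (hq : IsMaxStringLength R S α q) {x : V} (hxR : x ∈ R)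
    (hxC : x ∈ AddSubmonoid.closure S) (hxα : x ∉ ℝ ∙ α) (hd : hS.reflectCoord hα q x = 0)
    (hxαR : x + α ∈ R) :
    ∃ y, hS.IsBadRoot hα q y ∧ hS.basis.sumCoords y < hS.basis.sumCoords x := by
  set σ := hS.reflect α q
  obtain ⟨t, htα, hxt, hin⟩ :=
    hS.exists_inner_reflect_pos hα q hxC (fun h => hxα (h ▸ zero_mem _)) hd
  have hs' : σ t = t + (q t : ℝ) • α := hS.reflect_of_ne t.2 htα q
  have hs'R : σ t ∈ R := hs' ▸ (hq t t.2 htα).1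
  have hnext : σ t + α ∉ R := fun h => by
    have := (hq t t.2 htα).2 (q t + 1)
      (by push_cast; rwa [add_smul, one_smul, ← add_assoc, ← hs'])
    omega
  have hs'α : 0 ≤ ⟪σ t, α⟫ := by
    by_contra! h
    exact hnext (hR.add_mem_of_inner_neg hs'R (hS.1 hα) h)
  have hyR : x - σ t ∈ R := hR.sub_mem_of_inner_pos hxR hs'R hin
  have hyαR : x - σ t + α ∈ R := by
    have := hR.sub_mem_of_inner_pos hxαR hs'R
      (by rw [inner_add_left, real_inner_comm (σ t) α]; linarith)
    rwa [sub_add_eq_add_sub]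
  have hdy : hS.reflectCoord hα q (x - σ t) = 0 := by
    rw [map_sub, hd, hS.reflectCoord_reflect_of_ne hα q t.2 htα, sub_zero]
  have hyα : x - σ t ∉ ℝ ∙ α := by
    intro h
    obtain ⟨m, hm⟩ := Submodule.mem_span_singleton.1 h
    have hm0 : m = 0 := by simpa [← hm, hS.reflectCoord_self hα] using hdy
    rw [hm0, zero_smul, eq_comm, sub_eq_zero] at hm
    exact hnext (hm ▸ hxαR)
  have hyC : x - σ t ∈ AddSubmonoid.closure S := by
    obtain ⟨u, huα, hu0⟩ := hS.exists_repr_ne_zero_of_notMem_span hα hyα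
    refine hS.mem_closure_of_repr_pos hyR (u := u) (lt_of_le_of_ne ?_ hu0.symm)
    have := hS.repr_sub_nonneg hxC hxt u
    rw [hs', ← sub_sub, map_sub, Finsupp.sub_apply, map_smul, Finsupp.smul_apply,
      hS.repr_apply_of_ne hα huα]
    simpa using this
  refine ⟨x - σ t, ⟨hyR, hyC, hyα, Or.inr ⟨hdy, hyαR⟩⟩, ?_⟩
  rw [map_sub, hs', map_add, map_smul, hS.sumCoords_of_mem t.2, hS.sumCoords_of_mem hα]
  simp only [smul_eq_mul, mul_one]
  linarith [(q t).cast_nonneg (α := ℝ)]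

theorem not_isBadRoot (hR : IsGRS R) (hS : IsBase R S) (hα : α ∈ S) {q : V → ℕ}
    (hq : IsMaxStringLength R S α q) {x : V} : ¬ hS.IsBadRoot hα q x := by
  intro hx
  obtain ⟨n, hn⟩ := hS.exists_nat_sumCoords_of_mem_closure hx.2.1
  induction n using Nat.strong_induction_on generalizing x with
  | _ n ih =>
    obtain ⟨y, hy, hlt⟩ : ∃ y, hS.IsBadRoot hα q y ∧
        hS.basis.sumCoords y < hS.basis.sumCoords x := by
      obtain ⟨hxR, hxC, hxα, hneg | ⟨hd, hxαR⟩⟩ := hx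
      · exact hS.exists_isBadRoot_lt_of_reflectCoord_neg hR hα hq hxR hxC hxα hneg
      · exact hS.exists_isBadRoot_lt_of_reflectCoord_eq_zero hR hα hq hxR hxC hxα hd hxαR
    obtain ⟨m, hm⟩ := hS.exists_nat_sumCoords_of_mem_closure hy.2.1
    exact ih m (by exact_mod_cast hm ▸ hn ▸ hlt) hy hm

theorem reflectCoord_nonneg (hR : IsGRS R) (hS : IsBase R S) (hα : α ∈ S) {q : V → ℕ}
    (hq : IsMaxStringLength R S α q) {x : V} (hxR : x ∈ R) (hxC : x ∈ AddSubmonoid.closure S)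
    (hxα : x ∉ ℝ ∙ α) : 0 ≤ hS.reflectCoord hα q x :=
  not_lt.1 fun h => hS.not_isBadRoot hR hα hq ⟨hxR, hxC, hxα, Or.inl h⟩

theorem reflect_mem_closure (hR : IsGRS R) (hS : IsBase R S) (hα : α ∈ S) {q : V → ℕ}
    (hq : IsMaxStringLength R S α q) {x : V} (hxR : x ∈ R) (hxC : x ∈ AddSubmonoid.closure S)
    (hxk : ¬∃ k : ℤ, 0 < k ∧ x = (k : ℝ) • α) : hS.reflect α q x ∈ AddSubmonoid.closure S := by
  by_cases hxα : x ∈ ℝ ∙ α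
  · obtain ⟨m, rfl⟩ := Submodule.mem_span_singleton.1 hxα
    obtain ⟨n, rfl⟩ := hS.exists_nat_eq_of_smul_mem_closure hα hxC
    obtain rfl : n = 0 := by
      by_contra h
      exact hxk ⟨n, by omega, by simp⟩
    simp [zero_mem]
  refine hS.mem_closure_of_exists_nat_repr fun u => ?_
  by_cases hu : (u : V) = α
  · obtain rfl : u = ⟨α, hα⟩ := Subtype.ext hu
    obtain ⟨n, hn⟩ := hS.exists_int_reflectCoord_of_mem_closure hα q hxC
    have h0 : (0 : ℝ) ≤ n := hn ▸ hS.reflectCoord_nonneg hR hα hq hxR hxC hxα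
    refine ⟨n.toNat, ?_⟩
    change hS.reflectCoord hα q x = _
    rw [hn, ← Int.cast_natCast, Int.toNat_of_nonneg (by exact_mod_cast h0)]
  · rw [hS.repr_reflect_of_ne hα q hu]
    exact hS.exists_nat_repr_of_mem_closure hxC u

theorem reflect_mem_closure_or_neg (hR : IsGRS R) (hS : IsBase R S) (hα : α ∈ S) {q : V → ℕ}
    (hq : IsMaxStringLength R S α q) {x : V} (hxR : x ∈ R) (hxC : x ∈ AddSubmonoid.closure S) :
    hS.reflect α q x ∈ AddSubmonoid.closure S ∨ -hS.reflect α q x ∈ AddSubmonoid.closure S := by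
  by_cases hxk : ∃ k : ℤ, 0 < k ∧ x = (k : ℝ) • α
  · obtain ⟨k, hk, rfl⟩ := hxk
    right
    rw [map_smul, hS.reflect_self hα, smul_neg, neg_neg]
    exact intCast_smul_mem_closure hα hk.le
  · exact Or.inl (hS.reflect_mem_closure hR hα hq hxR hxC hxk)

theorem reflect_smul_mem_closure (hS : IsBase R S) (hα : α ∈ S) (q : V → ℕ) {k : ℤ}
    (hk : k < 0) : hS.reflect α q ((k : ℝ) • α) ∈ AddSubmonoid.closure S := by
  rw [map_smul, hS.reflect_self hα, smul_neg, ← neg_smul, ← Int.cast_neg]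
  exact intCast_smul_mem_closure hα (by omega)

theorem mem_of_reflect_mem_closure (hS : IsBase R S) (hα : α ∈ S) (q : V → ℕ) {x : V}
    (hxR : x ∈ R) (hσx : hS.reflect α q x ∈ AddSubmonoid.closure S) :
    (x ∈ AddSubmonoid.closure S ∧ ¬∃ k : ℤ, 0 < k ∧ x = (k : ℝ) • α) ∨
      ∃ k : ℤ, k < 0 ∧ x = (k : ℝ) • α := by
  by_cases hxα : x ∈ ℝ ∙ α
  · obtain ⟨m, rfl⟩ := Submodule.mem_span_singleton.1 hxα
    rw [map_smul, hS.reflect_self hα, smul_neg, ← neg_smul] at hσx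
    obtain ⟨n, hn⟩ := hS.exists_nat_eq_of_smul_mem_closure hα hσx
    have hmn : m = -n := by linarith
    rcases n.eq_zero_or_pos with rfl | hn0
    · have hα0 : α ≠ 0 := by simpa using hS.2.1.ne_zero ⟨α, hα⟩
      refine Or.inl ⟨by simp [hmn, zero_mem], fun ⟨k, hk, hkα⟩ => hα0 ?_⟩
      simpa [hmn, hk.ne'] using hkα.symm
    · exact Or.inr ⟨-n, by omega, by simp [hmn]⟩
  · obtain ⟨u, huα, hu0⟩ := hS.exists_repr_ne_zero_of_notMem_span hα hxα
    have hu := hS.repr_nonneg_of_mem_closure hσx u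
    rw [hS.repr_reflect_of_ne hα q huα] at hu
    refine Or.inl ⟨hS.mem_closure_of_repr_pos hxR (hu.lt_of_ne' hu0), ?_⟩
    rintro ⟨k, -, rfl⟩
    exact hxα (Submodule.smul_mem _ _ (Submodule.mem_span_singleton_self α))

theorem isNonnegIntComb_image_reflect_iff (hS : IsBase R S) (hα : α ∈ S) (q : V → ℕ) {v : V} :
    IsNonnegIntComb (hS.reflect α q '' S) v ↔ hS.reflect α q v ∈ AddSubmonoid.closure S :=
  isNonnegIntComb_iff.trans (hS.mem_closure_image_reflect_iff hα q)


theorem isBase_image_reflect (hR : IsGRS R) (hS : IsBase R S) (hα : α ∈ S) {q : V → ℕ}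
    (hq : IsMaxStringLength R S α q) : IsBase R (hS.reflect α q '' S) := by
  have hinj : Function.Injective (hS.reflect α q) :=
    Function.LeftInverse.injective (hS.reflect_reflect hα q)
  refine ⟨?_, ?_, ?_, fun β hβ => ?_⟩
  · rintro _ ⟨β, hβ, rfl⟩
    by_cases hβα : β = α
    · rw [hβα, hS.reflect_self hα]
      exact hR.neg_mem (hS.1 hα)
    · rw [hS.reflect_of_ne hβ hβα]
      exact (hq β hβ hβα).1
  · refine LinearIndepOn.image (f := hS.reflect α q) hS.2.1 ?_
    rw [LinearMap.ker_eq_bot.2 hinj]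
    exact disjoint_bot_right
  · rw [Submodule.span_image, hS.2.2.1, Submodule.map_top, LinearMap.range_eq_top]
    exact fun v => ⟨_, hS.reflect_reflect hα q v⟩
  · rw [hS.isNonnegIntComb_image_reflect_iff hα, hS.isNonnegIntComb_image_reflect_iff hα,
      map_neg]
    rcases hS.mem_closure_or_neg_mem_closure hβ with h | h
    · exact hS.reflect_mem_closure_or_neg hR hα hq hβ h
    · simpa [or_comm] using hS.reflect_mem_closure_or_neg hR hα hq (hR.neg_mem hβ) h

theorem posRoots_image_reflect (hR : IsGRS R) (hS : IsBase R S) (hα : α ∈ S) {q : V → ℕ}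
    (hq : IsMaxStringLength R S α q) :
    posRoots R (hS.reflect α q '' S) =
      (posRoots R S \ {v | ∃ k : ℤ, 0 < k ∧ v = (k : ℝ) • α}) ∪
        ({v | ∃ k : ℤ, k < 0 ∧ v = (k : ℝ) • α} ∩ R) := by
  ext x
  simp only [posRoots, Set.mem_union, Set.mem_sdiff, Set.mem_inter_iff, Set.mem_ofPred_eq,
    hS.isNonnegIntComb_image_reflect_iff hα, isNonnegIntComb_iff]
  constructor
  · rintro ⟨hxR, hσx⟩
    rcases hS.mem_of_reflect_mem_closure hα q hxR hσx with ⟨hxC, hxk⟩ | hk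
    · exact Or.inl ⟨⟨hxR, hxC⟩, hxk⟩
    · exact Or.inr ⟨hk, hxR⟩
  · rintro (⟨⟨hxR, hxC⟩, hxk⟩ | ⟨⟨k, hk, rfl⟩, hxR⟩)
    · exact ⟨hxR, hS.reflect_mem_closure hR hα hq hxR hxC hxk⟩
    · exact ⟨hxR, hS.reflect_smul_mem_closure hα q hk⟩

end IsBase

/-- Reflecting a positive system in a simple root `α`: the set
`P = (R⁺ \ ℤ_{>0}α) ∪ (ℤ_{<0}α ∩ R)` is a positive system, equal to `R⁺(S')` where
`S' = {-α} ∪ {β + q_β α : β ∈ S \ {α}}` is a base of `R` and `q_β` is the largest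
integer `q ≥ 0` with `β + qα ∈ R`. -/
theorem stmt10 (R S : Set V) (hR : IsGRS R) (hS : IsBase R S) (α : V) (hα : α ∈ S)
    (q : V → ℕ)
    (hq : ∀ β ∈ S, β ≠ α →
      β + (q β : ℝ) • α ∈ R ∧ ∀ n : ℕ, β + (n : ℝ) • α ∈ R → n ≤ q β) :
    IsPositiveSystem R
      ((posRoots R S \ {v | ∃ k : ℤ, 0 < k ∧ v = (k : ℝ) • α}) ∪
        ({v | ∃ k : ℤ, k < 0 ∧ v = (k : ℝ) • α} ∩ R)) ∧
    IsBase R (insert (-α) ((fun β => β + (q β : ℝ) • α) '' (S \ {α}))) ∧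
    (posRoots R S \ {v | ∃ k : ℤ, 0 < k ∧ v = (k : ℝ) • α}) ∪
        ({v | ∃ k : ℤ, k < 0 ∧ v = (k : ℝ) • α} ∩ R) =
      posRoots R (insert (-α) ((fun β => β + (q β : ℝ) • α) '' (S \ {α}))) := by
  have hbase := hS.isBase_image_reflect hR hα hq
  have hpos := hS.posRoots_image_reflect hR hα hq
  rw [hS.image_reflect hα q] at hbase hpos
  rw [← hpos]
  exact ⟨hbase.isPositiveSystem_posRoots hR, hbase, rfl⟩
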